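/- arXiv:1501.00616 — 2 statements merged into one kernel-verified Lean document; each statement's English description precedes it below -/
import Mathlib

section
/- Suppose that (N1), (N2) and (N3) hold on U, and let m := 1 + 4 Ω^{−2} ∂_u r ∂_ū r. Then at every point of U where ∂_u r ≤ 0 and ∂_ū r ≥ 0 (the regular region) one has ∂_u m ≤ 0 and ∂_ū m ≥ 0; consequently, for any a, b ≥ 0, the derivative of m along the spacelike vector a∂_ū − b∂_u is nonnegative. -/
/-!
Write `m = 1 + 4 A B` with `A = Ω⁻² ∂_u r` and `B = ∂_ū r`, so that
`∂_u m = 4 (∂_u A · B + A · ∂_u B)`. By (N1) `∂_u A ≤ 0` and by (N3) `∂_u B = ∂_u ∂_ū r ≥ 0`,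
so in the regular region, where `A ≤ 0 ≤ B`, both terms are `≤ 0`. The same computation in `ū`,
with (N2) and (N3), gives `∂_ū m ≥ 0`; there (N3) enters through `∂_ū ∂_u r`, which equals
`∂_u ∂_ū r` because `r` is `C²`.
-/

/-- Partial derivative in the null variable `u`. -/
noncomputable def pdu (f : ℝ → ℝ → ℝ) (u v : ℝ) : ℝ := deriv (fun u' => f u' v) u

/-- Partial derivative in the null variable `ū`. -/
noncomputable def pdub (f : ℝ → ℝ → ℝ) (u v : ℝ) : ℝ := deriv (fun v' => f u v') v

/-- The mass `m = 1 + 4 Ω^{−2} ∂_u r ∂_ū r`. -/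
noncomputable def mass (Ω r : ℝ → ℝ → ℝ) (u v : ℝ) : ℝ :=
  1 + 4 * ((Ω u v) ^ 2)⁻¹ * pdu r u v * pdub r u v

open Function Filter Topology

section PartialDerivatives

variable {f : ℝ → ℝ → ℝ} {u v : ℝ}

theorem DifferentiableAt.hasDerivAt_pdu (hf : DifferentiableAt ℝ (uncurry f) (u, v)) :
    HasDerivAt (fun u' => f u' v) (fderiv ℝ (uncurry f) (u, v) (1, 0)) u :=
  hf.hasFDerivAt.comp_hasDerivAt (l := uncurry f) u
    ((hasDerivAt_id u).prodMk (hasDerivAt_const u v))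

theorem pdu_eq_fderiv (hf : DifferentiableAt ℝ (uncurry f) (u, v)) :
    pdu f u v = fderiv ℝ (uncurry f) (u, v) (1, 0) :=
  hf.hasDerivAt_pdu.deriv

theorem DifferentiableAt.hasDerivAt_pdub (hf : DifferentiableAt ℝ (uncurry f) (u, v)) :
    HasDerivAt (fun v' => f u v') (fderiv ℝ (uncurry f) (u, v) (0, 1)) v :=
  hf.hasFDerivAt.comp_hasDerivAt (l := uncurry f) v
    ((hasDerivAt_const v u).prodMk (hasDerivAt_id v))

theorem pdub_eq_fderiv (hf : DifferentiableAt ℝ (uncurry f) (u, v)) :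
    pdub f u v = fderiv ℝ (uncurry f) (u, v) (0, 1) :=
  hf.hasDerivAt_pdub.deriv

variable {x : ℝ × ℝ}

theorem ContDiffAt.uncurry_pdu_eventuallyEq_fderiv (hf : ContDiffAt ℝ 1 (uncurry f) x) :
    uncurry (pdu f) =ᶠ[𝓝 x] fun p => fderiv ℝ (uncurry f) p (1, 0) := by
  filter_upwards [hf.eventually (by simp)] with p hp
  exact pdu_eq_fderiv (hp.differentiableAt one_ne_zero)

theorem ContDiffAt.uncurry_pdub_eventuallyEq_fderiv (hf : ContDiffAt ℝ 1 (uncurry f) x) :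
    uncurry (pdub f) =ᶠ[𝓝 x] fun p => fderiv ℝ (uncurry f) p (0, 1) := by
  filter_upwards [hf.eventually (by simp)] with p hp
  exact pdub_eq_fderiv (hp.differentiableAt one_ne_zero)

theorem ContDiffAt.uncurry_pdu {n : ℕ} (hf : ContDiffAt ℝ (n + 1) (uncurry f) x) :
    ContDiffAt ℝ n (uncurry (pdu f)) x :=
  ((hf.fderiv_right_succ).clm_apply contDiffAt_const).congr_of_eventuallyEq
    (hf.of_le (by simp)).uncurry_pdu_eventuallyEq_fderiv

theorem ContDiffAt.uncurry_pdub {n : ℕ} (hf : ContDiffAt ℝ (n + 1) (uncurry f) x) :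
    ContDiffAt ℝ n (uncurry (pdub f)) x :=
  ((hf.fderiv_right_succ).clm_apply contDiffAt_const).congr_of_eventuallyEq
    (hf.of_le (by simp)).uncurry_pdub_eventuallyEq_fderiv

theorem ContDiffAt.pdub_pdu_eq_pdu_pdub (hf : ContDiffAt ℝ 2 (uncurry f) (u, v)) :
    pdub (pdu f) u v = pdu (pdub f) u v := by
  have hD : DifferentiableAt ℝ (fderiv ℝ (uncurry f)) (u, v) :=
    (hf.fderiv_right_succ (n := 1)).differentiableAt one_ne_zero
  have hpdu := (hf.uncurry_pdu (n := 1)).differentiableAt one_ne_zero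
  have hpdub := (hf.uncurry_pdub (n := 1)).differentiableAt one_ne_zero
  rw [pdub_eq_fderiv hpdu, pdu_eq_fderiv hpdub,
    (hf.of_le one_le_two).uncurry_pdu_eventuallyEq_fderiv.fderiv_eq,
    (hf.of_le one_le_two).uncurry_pdub_eventuallyEq_fderiv.fderiv_eq,
    fderiv_clm_apply hD (differentiableAt_const _), fderiv_clm_apply hD (differentiableAt_const _)]
  simp only [fderiv_fun_const, Pi.zero_apply, ContinuousLinearMap.comp_zero, zero_add,
    ContinuousLinearMap.flip_apply]
  exact hf.isSymmSndFDerivAt (by simp) _ _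

end PartialDerivatives

theorem deriv_one_add_four_inv_sq_mul_mul {ω p q : ℝ → ℝ} {t : ℝ}
    (hω : DifferentiableAt ℝ ω t) (hω0 : ω t ≠ 0) (hp : DifferentiableAt ℝ p t)
    (hq : DifferentiableAt ℝ q t) :
    deriv (fun s => 1 + 4 * (ω s ^ 2)⁻¹ * p s * q s) t
      = 4 * (deriv (fun s => (ω s ^ 2)⁻¹ * p s) t * q t
        + (ω t ^ 2)⁻¹ * p t * deriv q t) := by
  have hωp : DifferentiableAt ℝ (fun s => (ω s ^ 2)⁻¹ * p s) t :=
    ((hω.pow 2).inv (pow_ne_zero 2 hω0)).mul hp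
  simpa only [mul_assoc] using
    (((hωp.hasDerivAt.fun_mul hq.hasDerivAt).const_mul 4).const_add 1).deriv

section Mass

variable {Ω r : ℝ → ℝ → ℝ} {u v : ℝ}

theorem pdu_mass (hΩ : DifferentiableAt ℝ (uncurry Ω) (u, v)) (hΩ0 : Ω u v ≠ 0)
    (hr : ContDiffAt ℝ 2 (uncurry r) (u, v)) :
    pdu (mass Ω r) u v
      = 4 * (pdu (fun u' v' => (Ω u' v' ^ 2)⁻¹ * pdu r u' v') u v * pdub r u v
        + (Ω u v ^ 2)⁻¹ * pdu r u v * pdu (pdub r) u v) :=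
  deriv_one_add_four_inv_sq_mul_mul hΩ.hasDerivAt_pdu.differentiableAt hΩ0
    ((hr.uncurry_pdu (n := 1)).differentiableAt one_ne_zero).hasDerivAt_pdu.differentiableAt
    ((hr.uncurry_pdub (n := 1)).differentiableAt one_ne_zero).hasDerivAt_pdu.differentiableAt

theorem pdub_mass (hΩ : DifferentiableAt ℝ (uncurry Ω) (u, v)) (hΩ0 : Ω u v ≠ 0)
    (hr : ContDiffAt ℝ 2 (uncurry r) (u, v)) :
    pdub (mass Ω r) u v
      = 4 * (pdub (fun u' v' => (Ω u' v' ^ 2)⁻¹ * pdub r u' v') u v * pdu r u v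
        + (Ω u v ^ 2)⁻¹ * pdub r u v * pdub (pdu r) u v) := by
  have hmass : (fun v' => mass Ω r u v')
      = fun v' => 1 + 4 * (Ω u v' ^ 2)⁻¹ * pdub r u v' * pdu r u v' :=
    funext fun _ => by simp only [mass, mul_right_comm _ (pdu r _ _)]
  change deriv (fun v' => mass Ω r u v') v = _
  rw [hmass]
  exact deriv_one_add_four_inv_sq_mul_mul hΩ.hasDerivAt_pdub.differentiableAt hΩ0
    ((hr.uncurry_pdub (n := 1)).differentiableAt one_ne_zero).hasDerivAt_pdub.differentiableAt
    ((hr.uncurry_pdu (n := 1)).differentiableAt one_ne_zero).hasDerivAt_pdub.differentiableAt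

end Mass

theorem mass_monotone_regular_region_general
    (κ : ℝ) (hκ : 0 < κ)
    (g : ℝ → ℝ)
    (U : Set (ℝ × ℝ)) (hU : IsOpen U)
    (Ω r φ : ℝ → ℝ → ℝ)
    (hΩ : ContDiffOn ℝ 2 (fun p : ℝ × ℝ => Ω p.1 p.2) U)
    (hr : ContDiffOn ℝ 2 (fun p : ℝ × ℝ => r p.1 p.2) U)
    (hΩpos : ∀ p ∈ U, 0 < Ω p.1 p.2)
    (hrpos : ∀ p ∈ U, 0 < r p.1 p.2)
    (hN1 : ∀ u v : ℝ, (u, v) ∈ U →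
      pdu (fun u' v' => ((Ω u' v') ^ 2)⁻¹ * pdu r u' v') u v
        = -(((Ω u v) ^ 2)⁻¹ * κ * r u v * (pdu φ u v) ^ 2))
    (hN2 : ∀ u v : ℝ, (u, v) ∈ U →
      pdub (fun u' v' => ((Ω u' v') ^ 2)⁻¹ * pdub r u' v') u v
        = -(((Ω u v) ^ 2)⁻¹ * κ * r u v * (pdub φ u v) ^ 2))
    (hN3 : ∀ u v : ℝ, (u, v) ∈ U →
      pdu (pdub r) u v = κ * (Ω u v) ^ 2 * (g (φ u v)) ^ 2 / (4 * r u v)) :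
    ∀ u v : ℝ, (u, v) ∈ U → pdu r u v ≤ 0 → 0 ≤ pdub r u v →
      pdu (mass Ω r) u v ≤ 0
      ∧ 0 ≤ pdub (mass Ω r) u v
      ∧ ∀ a b : ℝ, 0 ≤ a → 0 ≤ b →
          0 ≤ a * pdub (mass Ω r) u v - b * pdu (mass Ω r) u v := by
  intro u v huv hru hrv
  have hΩ1 : DifferentiableAt ℝ (uncurry Ω) (u, v) :=
    (hΩ.contDiffAt (hU.mem_nhds huv)).differentiableAt two_ne_zero
  have hr2 : ContDiffAt ℝ 2 (uncurry r) (u, v) := hr.contDiffAt (hU.mem_nhds huv)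
  have hΩ0 := hΩpos _ huv
  have hr0 := hrpos _ huv
  have hD : 0 ≤ κ * Ω u v ^ 2 * g (φ u v) ^ 2 / (4 * r u v) := by positivity
  have hN (s : ℝ) : 0 ≤ (Ω u v ^ 2)⁻¹ * κ * r u v * s ^ 2 := by positivity
  have hw : 0 ≤ (Ω u v ^ 2)⁻¹ := by positivity
  have hmu : pdu (mass Ω r) u v ≤ 0 := by
    rw [pdu_mass hΩ1 hΩ0.ne' hr2, hN1 u v huv, hN3 u v huv]
    linarith [mul_nonneg (hN (pdu φ u v)) hrv, mul_nonneg (mul_nonneg hw (neg_nonneg.2 hru)) hD]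
  have hmv : 0 ≤ pdub (mass Ω r) u v := by
    rw [pdub_mass hΩ1 hΩ0.ne' hr2, hN2 u v huv, hr2.pdub_pdu_eq_pdu_pdub, hN3 u v huv]
    linarith [mul_nonneg (hN (pdub φ u v)) (neg_nonneg.2 hru), mul_nonneg (mul_nonneg hw hrv) hD]
  exact ⟨hmu, hmv, fun a b ha hb => by
    linarith [mul_nonneg ha hmv, mul_nonneg hb (neg_nonneg.2 hmu)]⟩

/-- Given (N1), (N2), (N3) on `U`, at every point of the regular region
(`∂_u r ≤ 0` and `∂_ū r ≥ 0`) one has `∂_u m ≤ 0` and `∂_ū m ≥ 0`; consequently the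
derivative of `m` along any spacelike vector `a ∂_ū − b ∂_u` with `a, b ≥ 0` is
nonnegative. -/
theorem mass_monotone_regular_region
    (κ : ℝ) (hκ : 0 < κ)
    (g : ℝ → ℝ) (hg : ContDiff ℝ 1 g)
    (U : Set (ℝ × ℝ)) (hU : IsOpen U)
    (Ω r φ : ℝ → ℝ → ℝ)
    (hΩ : ContDiffOn ℝ 2 (fun p : ℝ × ℝ => Ω p.1 p.2) U)
    (hr : ContDiffOn ℝ 2 (fun p : ℝ × ℝ => r p.1 p.2) U)
    (hφ : ContDiffOn ℝ 2 (fun p : ℝ × ℝ => φ p.1 p.2) U)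
    (hΩpos : ∀ p ∈ U, 0 < Ω p.1 p.2)
    (hrpos : ∀ p ∈ U, 0 < r p.1 p.2)
    (hN1 : ∀ u v : ℝ, (u, v) ∈ U →
      pdu (fun u' v' => ((Ω u' v') ^ 2)⁻¹ * pdu r u' v') u v
        = -(((Ω u v) ^ 2)⁻¹ * κ * r u v * (pdu φ u v) ^ 2))
    (hN2 : ∀ u v : ℝ, (u, v) ∈ U →
      pdub (fun u' v' => ((Ω u' v') ^ 2)⁻¹ * pdub r u' v') u v
        = -(((Ω u v) ^ 2)⁻¹ * κ * r u v * (pdub φ u v) ^ 2))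
    (hN3 : ∀ u v : ℝ, (u, v) ∈ U →
      pdu (pdub r) u v = κ * (Ω u v) ^ 2 * (g (φ u v)) ^ 2 / (4 * r u v)) :
    ∀ u v : ℝ, (u, v) ∈ U → pdu r u v ≤ 0 → 0 ≤ pdub r u v →
      pdu (mass Ω r) u v ≤ 0
      ∧ 0 ≤ pdub (mass Ω r) u v
      ∧ ∀ a b : ℝ, 0 ≤ a → 0 ≤ b →
          0 ≤ a * pdub (mass Ω r) u v - b * pdu (mass Ω r) u v :=
  mass_monotone_regular_region_general κ hκ g U hU Ω r φ hΩ hr hΩpos hrpos hN1 hN2 hN3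
end

section
/- Suppose that (E1), (E2), (E3) and (E4) hold on U ∩ {r > 0}. Then for every a ∈ ℝ, at every point of U with r > 0: −∂_t( r^{a+1} e^{2β} 𝐦 ) + ∂_r( r^{a+1} e^{α+β} (𝐞 − 𝐟) ) = r^{a} e^{α+β} ( ((1+a)/2) e^{−2α}(∂_tφ)² + ((a−1)/2) e^{−2β}(∂_rφ)² + ((1−a)/2) g(φ)²/r² ). In particular, for a = 1 the right-hand side equals r e^{α+β} e^{−2α}(∂_tφ)². -/
open Real

/-- Partial derivative in the time variable `t`. -/
noncomputable def pdt (f : ℝ → ℝ → ℝ) (t r : ℝ) : ℝ := deriv (fun t' => f t' r) t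

/-- Partial derivative in the radial variable `r`. -/
noncomputable def pdr (f : ℝ → ℝ → ℝ) (t r : ℝ) : ℝ := deriv (fun r' => f t r') r

/-- The energy density 𝐞. -/
noncomputable def eDen (g : ℝ → ℝ) (α β φ : ℝ → ℝ → ℝ) (t r : ℝ) : ℝ :=
  (1 / 2) * (exp (-(2 * α t r)) * (pdt φ t r) ^ 2 + exp (-(2 * β t r)) * (pdr φ t r) ^ 2
    + (g (φ t r)) ^ 2 / r ^ 2)

/-- The momentum density 𝐦. -/
noncomputable def mDen (α β φ : ℝ → ℝ → ℝ) (t r : ℝ) : ℝ :=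
  exp (-(α t r + β t r)) * pdt φ t r * pdr φ t r

/-- The rotational potential density 𝐟 = g(φ)²/r². -/
noncomputable def fDen (g : ℝ → ℝ) (φ : ℝ → ℝ → ℝ) (t r : ℝ) : ℝ :=
  (g (φ t r)) ^ 2 / r ^ 2

/-! Both components are differentiated by the product rule. The second time derivative of `φ`
enters only through `φ_tt + (β_t - α_t) φ_t`, which the wave map equation (E4) trades for radial
derivatives; afterwards the terms in `φ_t φ_tr` (symmetry of mixed partials), `φ_r φ_rr` and
`g g'(φ) φ_r` cancel. The metric then survives only in
`r (α_r + β_r)(𝐞 - 𝐟) - r α_r (e^{-2α} φ_t² + e^{-2β} φ_r²)`, and by (E1) and (E3) both products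
equal `(κ/2) r² e^{2β} (e^{-2α} φ_t² + e^{-2β} φ_r²)(e^{-2α} φ_t² + e^{-2β} φ_r² - g(φ)²/r²)`. -/
open Function

section PartialDerivatives

variable {f : ℝ → ℝ → ℝ} {t r : ℝ}

theorem HasFDerivAt.hasDerivAt_pdt {L : ℝ × ℝ →L[ℝ] ℝ} (h : HasFDerivAt (uncurry f) L (t, r)) :
    HasDerivAt (fun t' => f t' r) (L (1, 0)) t :=
  h.comp_hasDerivAt (l := uncurry f) t ((hasDerivAt_id' t).prodMk (hasDerivAt_const t r))

theorem HasFDerivAt.hasDerivAt_pdr {L : ℝ × ℝ →L[ℝ] ℝ} (h : HasFDerivAt (uncurry f) L (t, r)) :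
    HasDerivAt (fun r' => f t r') (L (0, 1)) r :=
  h.comp_hasDerivAt (l := uncurry f) r ((hasDerivAt_const r t).prodMk (hasDerivAt_id' r))

theorem HasFDerivAt.pdt_eq {L : ℝ × ℝ →L[ℝ] ℝ} (h : HasFDerivAt (uncurry f) L (t, r)) :
    pdt f t r = L (1, 0) :=
  h.hasDerivAt_pdt.deriv

theorem HasFDerivAt.pdr_eq {L : ℝ × ℝ →L[ℝ] ℝ} (h : HasFDerivAt (uncurry f) L (t, r)) :
    pdr f t r = L (0, 1) :=
  h.hasDerivAt_pdr.deriv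

theorem hasDerivAt_pdt (h : DifferentiableAt ℝ (uncurry f) (t, r)) :
    HasDerivAt (fun t' => f t' r) (pdt f t r) t :=
  h.hasFDerivAt.hasDerivAt_pdt.differentiableAt.hasDerivAt

theorem hasDerivAt_pdr (h : DifferentiableAt ℝ (uncurry f) (t, r)) :
    HasDerivAt (fun r' => f t r') (pdr f t r) r :=
  h.hasFDerivAt.hasDerivAt_pdr.differentiableAt.hasDerivAt

theorem hasFDerivAt_uncurry_of_eq_fderiv_apply {v : ℝ × ℝ} {D : ℝ → ℝ → ℝ}
    (hf : ContDiffAt ℝ 2 (uncurry f) (t, r))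
    (hD : ∀ p, DifferentiableAt ℝ (uncurry f) p → uncurry D p = fderiv ℝ (uncurry f) p v) :
    HasFDerivAt (uncurry D) ((fderiv ℝ (fderiv ℝ (uncurry f)) (t, r)).flip v) (t, r) := by
  have hdiff : DifferentiableAt ℝ (fderiv ℝ (uncurry f)) (t, r) :=
    (hf.fderiv_right (m := 1) (by norm_num)).differentiableAt one_ne_zero
  have hdir : HasFDerivAt (fun p => fderiv ℝ (uncurry f) p v)
      ((fderiv ℝ (fderiv ℝ (uncurry f)) (t, r)).flip v) (t, r) := by
    simpa using hdiff.hasFDerivAt.clm_apply (hasFDerivAt_const v (t, r))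
  refine hdir.congr_of_eventuallyEq ?_
  filter_upwards [hf.eventually (by simp)] with p hp
  exact hD p (hp.differentiableAt (by norm_num))

theorem hasFDerivAt_uncurry_pdt (hf : ContDiffAt ℝ 2 (uncurry f) (t, r)) :
    HasFDerivAt (uncurry (pdt f)) ((fderiv ℝ (fderiv ℝ (uncurry f)) (t, r)).flip (1, 0)) (t, r) :=
  hasFDerivAt_uncurry_of_eq_fderiv_apply hf fun _ hp => hp.hasFDerivAt.pdt_eq

theorem hasFDerivAt_uncurry_pdr (hf : ContDiffAt ℝ 2 (uncurry f) (t, r)) :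
    HasFDerivAt (uncurry (pdr f)) ((fderiv ℝ (fderiv ℝ (uncurry f)) (t, r)).flip (0, 1)) (t, r) :=
  hasFDerivAt_uncurry_of_eq_fderiv_apply hf fun _ hp => hp.hasFDerivAt.pdr_eq

theorem pdt_pdr_eq_pdr_pdt (hf : ContDiffAt ℝ 2 (uncurry f) (t, r)) :
    pdt (pdr f) t r = pdr (pdt f) t r := by
  rw [(hasFDerivAt_uncurry_pdr hf).pdt_eq, (hasFDerivAt_uncurry_pdt hf).pdr_eq]
  exact hf.isSymmSndFDerivAt (by simp) _ _

end PartialDerivatives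

section Currents

variable {g : ℝ → ℝ} {α β φ : ℝ → ℝ → ℝ} {t r : ℝ}

theorem pdt_rpow_mul_exp_mul_mDen (a : ℝ) (hα : DifferentiableAt ℝ (uncurry α) (t, r))
    (hβ : DifferentiableAt ℝ (uncurry β) (t, r)) (hφ : ContDiffAt ℝ 2 (uncurry φ) (t, r)) :
    pdt (fun t' r' => r' ^ (a + 1) * exp (2 * β t' r') * mDen α β φ t' r') t r =
      r ^ (a + 1) * exp (β t r - α t r) *
        ((pdt (pdt φ) t r + (pdt β t r - pdt α t r) * pdt φ t r) * pdr φ t r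
          + pdt φ t r * pdr (pdt φ) t r) := by
  have hfun : (fun t' => r ^ (a + 1) * exp (2 * β t' r) * mDen α β φ t' r) =
      fun t' => r ^ (a + 1) * (exp (β t' r - α t' r) * pdt φ t' r * pdr φ t' r) := by
    funext t'
    rw [mDen, show β t' r - α t' r = 2 * β t' r + -(α t' r + β t' r) by ring, exp_add]
    ring
  have hderiv := (((((hasDerivAt_pdt hβ).fun_sub (hasDerivAt_pdt hα)).exp.fun_mul
    (hasDerivAt_pdt (hasFDerivAt_uncurry_pdt hφ).differentiableAt)).fun_mul
    (hasDerivAt_pdt (hasFDerivAt_uncurry_pdr hφ).differentiableAt)).const_mul (r ^ (a + 1)))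
  rw [pdt, hfun, hderiv.deriv, pdt_pdr_eq_pdr_pdt hφ]
  ring

theorem pdr_rpow_mul_exp_mul {F : ℝ → ℝ → ℝ} (a : ℝ) (hr : r ≠ 0)
    (hα : DifferentiableAt ℝ (uncurry α) (t, r)) (hβ : DifferentiableAt ℝ (uncurry β) (t, r))
    {F' : ℝ} (hF : HasDerivAt (fun r' => F t r') F' r) :
    pdr (fun t' r' => r' ^ (a + 1) * exp (α t' r' + β t' r') * F t' r') t r =
      r ^ a * exp (α t r + β t r) *
        ((a + 1 + r * (pdr α t r + pdr β t r)) * F t r + r * F') := by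
  have hpow : HasDerivAt (fun r' : ℝ => r' ^ (a + 1)) ((a + 1) * r ^ a) r := by
    simpa using Real.hasDerivAt_rpow_const (p := a + 1) (Or.inl hr)
  have hderiv := (hpow.fun_mul ((hasDerivAt_pdr hα).fun_add (hasDerivAt_pdr hβ)).exp).fun_mul hF
  rw [pdr, hderiv.deriv, Real.rpow_add_one hr]
  ring

theorem eDen_sub_fDen :
    eDen g α β φ t r - fDen g φ t r =
      (exp (-(2 * α t r)) * pdt φ t r ^ 2 + exp (-(2 * β t r)) * pdr φ t r ^ 2
        - g (φ t r) ^ 2 / r ^ 2) / 2 := by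
  rw [eDen, fDen]
  ring

theorem hasDerivAt_eDen_sub_fDen (hr : r ≠ 0) (hα : DifferentiableAt ℝ (uncurry α) (t, r))
    (hβ : DifferentiableAt ℝ (uncurry β) (t, r)) (hφ : ContDiffAt ℝ 2 (uncurry φ) (t, r))
    (hg : DifferentiableAt ℝ g (φ t r)) :
    HasDerivAt (fun r' => eDen g α β φ t r' - fDen g φ t r')
      (-(pdr α t r * exp (-(2 * α t r)) * pdt φ t r ^ 2)
        + exp (-(2 * α t r)) * pdt φ t r * pdr (pdt φ) t r
        - pdr β t r * exp (-(2 * β t r)) * pdr φ t r ^ 2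
        + exp (-(2 * β t r)) * pdr φ t r * pdr (pdr φ) t r
        - g (φ t r) * deriv g (φ t r) * pdr φ t r / r ^ 2 + g (φ t r) ^ 2 / r ^ 3) r := by
  have hX := ((hasDerivAt_pdr hα).const_mul 2).fun_neg.exp.fun_mul
    ((hasDerivAt_pdr (hasFDerivAt_uncurry_pdt hφ).differentiableAt).fun_pow 2)
  have hY := ((hasDerivAt_pdr hβ).const_mul 2).fun_neg.exp.fun_mul
    ((hasDerivAt_pdr (hasFDerivAt_uncurry_pdr hφ).differentiableAt).fun_pow 2)
  have hgφ : HasDerivAt (fun r' => g (φ t r')) (deriv g (φ t r) * pdr φ t r) r :=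
    hg.hasDerivAt.comp r (hasDerivAt_pdr (hφ.differentiableAt (by norm_num)))
  have hZ := (hgφ.fun_pow 2).fun_div (hasDerivAt_pow 2 r) (pow_ne_zero 2 hr)
  simp only [eDen_sub_fDen]
  refine (((hX.fun_add hY).fun_sub hZ).div_const 2).congr_deriv ?_
  field_simp
  ring

end Currents

theorem Ra_current_divergence_at {g : ℝ → ℝ} {α β φ : ℝ → ℝ → ℝ} {t r : ℝ} (κ a : ℝ)
    (hr : r ≠ 0) (hα : DifferentiableAt ℝ (uncurry α) (t, r))
    (hβ : DifferentiableAt ℝ (uncurry β) (t, r)) (hφ : ContDiffAt ℝ 2 (uncurry φ) (t, r))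
    (hg : DifferentiableAt ℝ g (φ t r))
    (hE1 : pdr β t r = (κ / 2) * r * exp (2 * β t r) *
        (exp (-(2 * α t r)) * (pdt φ t r) ^ 2 + exp (-(2 * β t r)) * (pdr φ t r) ^ 2
          + (g (φ t r)) ^ 2 / r ^ 2))
    (hE3 : pdr α t r = (κ / 2) * r * exp (2 * β t r) *
        (exp (-(2 * α t r)) * (pdt φ t r) ^ 2 + exp (-(2 * β t r)) * (pdr φ t r) ^ 2
          - (g (φ t r)) ^ 2 / r ^ 2))
    (hE4 : -(exp (-(2 * α t r)) * (pdt (pdt φ) t r + (pdt β t r - pdt α t r) * pdt φ t r))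
        + exp (-(2 * β t r)) * (pdr (pdr φ) t r + pdr φ t r / r
            + (pdr α t r - pdr β t r) * pdr φ t r)
      = g (φ t r) * deriv g (φ t r) / r ^ 2) :
    -(pdt (fun t' r' => r' ^ (a + 1) * exp (2 * β t' r') * mDen α β φ t' r') t r)
        + pdr (fun t' r' => r' ^ (a + 1) * exp (α t' r' + β t' r')
            * (eDen g α β φ t' r' - fDen g φ t' r')) t r
      = r ^ a * exp (α t r + β t r) *
          (((1 + a) / 2) * exp (-(2 * α t r)) * (pdt φ t r) ^ 2
            + ((a - 1) / 2) * exp (-(2 * β t r)) * (pdr φ t r) ^ 2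
            + ((1 - a) / 2) * (g (φ t r)) ^ 2 / r ^ 2) := by
  rw [pdt_rpow_mul_exp_mul_mDen a hα hβ hφ,
    pdr_rpow_mul_exp_mul a hr hα hβ (hasDerivAt_eDen_sub_fDen hr hα hβ hφ hg), eDen_sub_fDen]
  linear_combination (norm := skip) r ^ (a + 1) * exp (α t r + β t r) * pdr φ t r * hE4
  rw [hE1, hE3, Real.rpow_add_one hr]
  simp only [exp_neg, exp_sub, exp_add, two_mul]
  field_simp
  ring

theorem Ra_current_divergence_general
    (κ : ℝ)
    (g : ℝ → ℝ) (hg : ContDiff ℝ 1 g)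
    (U : Set (ℝ × ℝ)) (hU : IsOpen U)
    (α β φ : ℝ → ℝ → ℝ)
    (hα : ContDiffOn ℝ 2 (fun p : ℝ × ℝ => α p.1 p.2) U)
    (hβ : ContDiffOn ℝ 2 (fun p : ℝ × ℝ => β p.1 p.2) U)
    (hφ : ContDiffOn ℝ 2 (fun p : ℝ × ℝ => φ p.1 p.2) U)
    (hE1 : ∀ t r : ℝ, (t, r) ∈ U → 0 < r →
      pdr β t r = (κ / 2) * r * exp (2 * β t r) *
        (exp (-(2 * α t r)) * (pdt φ t r) ^ 2 + exp (-(2 * β t r)) * (pdr φ t r) ^ 2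
          + (g (φ t r)) ^ 2 / r ^ 2))
    (hE3 : ∀ t r : ℝ, (t, r) ∈ U → 0 < r →
      pdr α t r = (κ / 2) * r * exp (2 * β t r) *
        (exp (-(2 * α t r)) * (pdt φ t r) ^ 2 + exp (-(2 * β t r)) * (pdr φ t r) ^ 2
          - (g (φ t r)) ^ 2 / r ^ 2))
    (hE4 : ∀ t r : ℝ, (t, r) ∈ U → 0 < r →
      -(exp (-(2 * α t r)) * (pdt (pdt φ) t r + (pdt β t r - pdt α t r) * pdt φ t r))
        + exp (-(2 * β t r)) * (pdr (pdr φ) t r + pdr φ t r / r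
            + (pdr α t r - pdr β t r) * pdr φ t r)
      = g (φ t r) * deriv g (φ t r) / r ^ 2) :
    (∀ a : ℝ, ∀ t r : ℝ, (t, r) ∈ U → 0 < r →
      -(pdt (fun t' r' => r' ^ (a + 1) * exp (2 * β t' r') * mDen α β φ t' r') t r)
        + pdr (fun t' r' => r' ^ (a + 1) * exp (α t' r' + β t' r')
            * (eDen g α β φ t' r' - fDen g φ t' r')) t r
      = r ^ a * exp (α t r + β t r) *
          (((1 + a) / 2) * exp (-(2 * α t r)) * (pdt φ t r) ^ 2
            + ((a - 1) / 2) * exp (-(2 * β t r)) * (pdr φ t r) ^ 2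
            + ((1 - a) / 2) * (g (φ t r)) ^ 2 / r ^ 2))
    ∧ (∀ t r : ℝ, (t, r) ∈ U → 0 < r →
      -(pdt (fun t' r' => r' ^ ((1:ℝ) + 1) * exp (2 * β t' r') * mDen α β φ t' r') t r)
        + pdr (fun t' r' => r' ^ ((1:ℝ) + 1) * exp (α t' r' + β t' r')
            * (eDen g α β φ t' r' - fDen g φ t' r')) t r
      = r * exp (α t r + β t r) * (exp (-(2 * α t r)) * (pdt φ t r) ^ 2)) := by
  have key : ∀ a t r, (t, r) ∈ U → 0 < r → _ := fun a t r hmem hr =>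
    have hnhds := hU.mem_nhds hmem
    Ra_current_divergence_at κ a hr.ne' ((hα.contDiffAt hnhds).differentiableAt (by norm_num))
      ((hβ.contDiffAt hnhds).differentiableAt (by norm_num)) (hφ.contDiffAt hnhds)
      (hg.differentiable one_ne_zero _) (hE1 t r hmem hr) (hE3 t r hmem hr) (hE4 t r hmem hr)
  refine ⟨key, fun t r hmem hr => ?_⟩
  rw [key 1 t r hmem hr, Real.rpow_one]
  ring

/-- Divergence identity for the current `P_{R_a} = −e^{β−α} r^a 𝐦 ∂_t + r^a (𝐞 − 𝐟) ∂_r`: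
given (E1)–(E4) on `U ∩ {r > 0}`, for every `a ∈ ℝ` and every point of `U` with `r > 0`,
`−∂_t(r^{a+1} e^{2β} 𝐦) + ∂_r(r^{a+1} e^{α+β}(𝐞−𝐟))
  = r^a e^{α+β} ( ((1+a)/2) e^{−2α} φ_t² + ((a−1)/2) e^{−2β} φ_r² + ((1−a)/2) g(φ)²/r² )`,
and in particular for `a = 1` the right-hand side equals `r e^{α+β} e^{−2α} φ_t²`. -/
theorem Ra_current_divergence
    (κ : ℝ) (hκ : 0 < κ)
    (g : ℝ → ℝ) (hg : ContDiff ℝ 1 g)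
    (U : Set (ℝ × ℝ)) (hU : IsOpen U)
    (α β φ : ℝ → ℝ → ℝ)
    (hα : ContDiffOn ℝ 2 (fun p : ℝ × ℝ => α p.1 p.2) U)
    (hβ : ContDiffOn ℝ 2 (fun p : ℝ × ℝ => β p.1 p.2) U)
    (hφ : ContDiffOn ℝ 2 (fun p : ℝ × ℝ => φ p.1 p.2) U)
    (hE1 : ∀ t r : ℝ, (t, r) ∈ U → 0 < r →
      pdr β t r = (κ / 2) * r * exp (2 * β t r) *
        (exp (-(2 * α t r)) * (pdt φ t r) ^ 2 + exp (-(2 * β t r)) * (pdr φ t r) ^ 2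
          + (g (φ t r)) ^ 2 / r ^ 2))
    (hE2 : ∀ t r : ℝ, (t, r) ∈ U → 0 < r →
      pdt β t r = κ * r * pdt φ t r * pdr φ t r)
    (hE3 : ∀ t r : ℝ, (t, r) ∈ U → 0 < r →
      pdr α t r = (κ / 2) * r * exp (2 * β t r) *
        (exp (-(2 * α t r)) * (pdt φ t r) ^ 2 + exp (-(2 * β t r)) * (pdr φ t r) ^ 2
          - (g (φ t r)) ^ 2 / r ^ 2))
    (hE4 : ∀ t r : ℝ, (t, r) ∈ U → 0 < r →
      -(exp (-(2 * α t r)) * (pdt (pdt φ) t r + (pdt β t r - pdt α t r) * pdt φ t r))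
        + exp (-(2 * β t r)) * (pdr (pdr φ) t r + pdr φ t r / r
            + (pdr α t r - pdr β t r) * pdr φ t r)
      = g (φ t r) * deriv g (φ t r) / r ^ 2) :
    (∀ a : ℝ, ∀ t r : ℝ, (t, r) ∈ U → 0 < r →
      -(pdt (fun t' r' => r' ^ (a + 1) * exp (2 * β t' r') * mDen α β φ t' r') t r)
        + pdr (fun t' r' => r' ^ (a + 1) * exp (α t' r' + β t' r')
            * (eDen g α β φ t' r' - fDen g φ t' r')) t r
      = r ^ a * exp (α t r + β t r) *
          (((1 + a) / 2) * exp (-(2 * α t r)) * (pdt φ t r) ^ 2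
            + ((a - 1) / 2) * exp (-(2 * β t r)) * (pdr φ t r) ^ 2
            + ((1 - a) / 2) * (g (φ t r)) ^ 2 / r ^ 2))
    ∧ (∀ t r : ℝ, (t, r) ∈ U → 0 < r →
      -(pdt (fun t' r' => r' ^ ((1:ℝ) + 1) * exp (2 * β t' r') * mDen α β φ t' r') t r)
        + pdr (fun t' r' => r' ^ ((1:ℝ) + 1) * exp (α t' r' + β t' r')
            * (eDen g α β φ t' r' - fDen g φ t' r')) t r
      = r * exp (α t r + β t r) * (exp (-(2 * α t r)) * (pdt φ t r) ^ 2)) :=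
  Ra_current_divergence_general κ g hg U hU α β φ hα hβ hφ hE1 hE3 hE4
end
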